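/- dist_AW is a pseudometric on block lower triangular matrices in ℝ^{Nd×Nd}: it is nonnegative, symmetric, vanishes on the diagonal, and satisfies the triangle inequality dist_AW(L, P) ≤ dist_AW(L, M) + dist_AW(M, P). -/

import Mathlib

open Matrix BigOperators Classical

/-- Squared Frobenius norm. -/
def frobSq {m n : Type*} [Fintype m] [Fintype n] (C : Matrix m n ℝ) : ℝ :=
  ∑ i, ∑ j, (C i j) ^ 2

/-- Frobenius norm. -/
noncomputable def frobNorm {m n : Type*} [Fintype m] [Fintype n]
    (C : Matrix m n ℝ) : ℝ :=
  Real.sqrt (frobSq C)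

/-- Square root of a positive semidefinite matrix (junk value `0` otherwise). -/
noncomputable def psdSqrt {n : Type*} [Fintype n] [DecidableEq n]
    (A : Matrix n n ℝ) : Matrix n n ℝ :=
  if h : A.PosSemidef then
    (h.1.eigenvectorUnitary : Matrix n n ℝ) *
      diagonal ((RCLike.ofReal : ℝ → ℝ) ∘ Real.sqrt ∘ h.1.eigenvalues) *
      (star h.1.eigenvectorUnitary : Matrix n n ℝ)
  else 0

/-- Nuclear norm: `‖C‖₊ = tr((CᵀC)^{1/2})`, the sum of the singular values. -/
noncomputable def nuclearNorm {m n : Type*} [Fintype m] [Fintype n] [DecidableEq n]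
    (C : Matrix m n ℝ) : ℝ :=
  (psdSqrt (Cᵀ * C)).trace

/-- Squared Bures–Wasserstein distance:
`dist_BW²(A,B) = tr A + tr B − 2 tr((A^{1/2} B A^{1/2})^{1/2})`. -/
noncomputable def distBWsq {n : Type*} [Fintype n] [DecidableEq n]
    (A B : Matrix n n ℝ) : ℝ :=
  A.trace + B.trace - 2 * (psdSqrt (psdSqrt A * B * psdSqrt A)).trace

variable {N d : ℕ}

/-- `L` is block lower triangular: all `d×d` blocks `L_{s,t}` with `s < t` vanish. -/
def BlockLowerTri (L : Matrix (Fin N × Fin d) (Fin N × Fin d) ℝ) : Prop :=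
  ∀ s t : Fin N, s < t → ∀ i j : Fin d, L (s, i) (t, j) = 0

/-- The `t`-th `d×d` diagonal block of a matrix. -/
def diagBlock (A : Matrix (Fin N × Fin d) (Fin N × Fin d) ℝ) (t : Fin N) :
    Matrix (Fin d) (Fin d) ℝ :=
  fun i j => A (t, i) (t, j)

/-- The `t`-th column block `L_{·,t} ∈ ℝ^{Nd×d}` of `L`. -/
def colBlock (L : Matrix (Fin N × Fin d) (Fin N × Fin d) ℝ) (t : Fin N) :
    Matrix (Fin N × Fin d) (Fin d) ℝ :=
  fun p j => L p (t, j)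

/-- Block diagonal matrix built from `d×d` blocks `Q₁, …, Q_N`. -/
def blockDiag (Q : Fin N → Matrix (Fin d) (Fin d) ℝ) :
    Matrix (Fin N × Fin d) (Fin N × Fin d) ℝ :=
  fun p q => if p.1 = q.1 then Q q.1 p.2 q.2 else 0

/-- Squared adapted Wasserstein pseudo-distance between Cholesky factors:
`dist_AW²(L,M) = ‖L‖_F² + ‖M‖_F² − 2 ∑_t ‖(LᵀM)_{t,t}‖₊`. -/
noncomputable def distAWsq (L M : Matrix (Fin N × Fin d) (Fin N × Fin d) ℝ) : ℝ :=
  frobSq L + frobSq M - 2 * ∑ t : Fin N, nuclearNorm (diagBlock (Lᵀ * M) t)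

/-- Adapted Wasserstein pseudo-distance. -/
noncomputable def distAW (L M : Matrix (Fin N × Fin d) (Fin N × Fin d) ℝ) : ℝ :=
  Real.sqrt (distAWsq L M)


/-! For a block diagonal orthogonal `Q = diag(Q₁, …, Q_N)`,
`‖L - M Q‖_F² = ‖L‖_F² + ‖M‖_F² - 2 ∑_t tr((LᵀM)_{t,t} Q_t)`, and `tr(C Q_t) ≤ ‖C‖₊` for every
orthogonal `Q_t`, with equality when `Q_t` is the transposed orthogonal factor of a polar
decomposition of `C`. Hence `dist_AW(L, M) = min_Q ‖L - M Q‖_F`. Since these `Q` form a group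
acting isometrically on the right, symmetry and the triangle inequality are inherited from the
Frobenius norm. -/

theorem exists_orthonormalBasis_smul_eq_of_pairwise_inner {𝕜 E ι : Type*} [RCLike 𝕜]
    [NormedAddCommGroup E] [InnerProductSpace 𝕜 E] [FiniteDimensional 𝕜 E] [Fintype ι]
    (card_ι : Module.finrank 𝕜 E = Fintype.card ι) {w : ι → E}
    (hw : Pairwise fun i j => inner 𝕜 (w i) (w j) = 0) :
    ∃ b : OrthonormalBasis ι 𝕜 E, ∀ i, w i = (‖w i‖ : 𝕜) • b i := by
  let v i := (‖w i‖⁻¹ : 𝕜) • w i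
  have hv : Orthonormal 𝕜 ({i | w i ≠ 0}.domRestrict v) :=
    ⟨fun i => norm_smul_inv_norm i.2, fun i j hij => by
      simp [Set.domRestrict, v, inner_smul_left, inner_smul_right,
        hw (Subtype.coe_ne_coe.2 hij)]⟩
  obtain ⟨b, hb⟩ := hv.exists_orthonormalBasis_extension_of_card_eq card_ι
  refine ⟨b, fun i => ?_⟩
  by_cases hi : w i = 0
  · simp [hi]
  · rw [hb i hi, smul_inv_smul₀ (by simpa using hi)]

namespace Matrix

variable {m n : Type*} [Fintype m]

theorem transpose_mul_apply_le_sqrt_mul_sqrt (X Y : Matrix m n ℝ) (j k : n) :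
    (Xᵀ * Y) j k ≤ √((Xᵀ * X) j j) * √((Yᵀ * Y) k k) := by
  simpa [mul_apply, sq] using
    Real.sum_mul_le_sqrt_mul_sqrt Finset.univ (fun i => X i j) (fun i => Y i k)

variable [Fintype n]

theorem posSemidef_transpose_mul_self (C : Matrix m n ℝ) : (Cᵀ * C).PosSemidef := by
  simpa using posSemidef_conjTranspose_mul_self C

variable [DecidableEq n]

theorem exists_orthogonal_mul_diagonal_sqrt {W : Matrix n n ℝ} {μ : n → ℝ}
    (hW : Wᵀ * W = diagonal μ) :
    ∃ V : Matrix n n ℝ, Vᵀ * V = 1 ∧ W = V * diagonal fun j => √(μ j) := by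
  let w j : EuclideanSpace ℝ n := WithLp.toLp 2 (Wᵀ j)
  have hinner (j k : n) : inner ℝ (w j) (w k) = diagonal μ j k := by
    rw [← hW, EuclideanSpace.inner_eq_star_dotProduct, mul_apply']
    exact dotProduct_comm _ _
  obtain ⟨b, hb⟩ := exists_orthonormalBasis_smul_eq_of_pairwise_inner (w := w)
    (finrank_euclideanSpace (𝕜 := ℝ) (ι := n)) fun j k hjk => by simp [hinner, hjk]
  refine ⟨(EuclideanSpace.basisFun n ℝ).toBasis.toMatrix b.toBasis, ?_, ?_⟩
  · simpa using (EuclideanSpace.basisFun n ℝ).toMatrix_orthonormalBasis_conjTranspose_mul_self b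
  · ext i j
    have hnorm : ‖w j‖ = √(μ j) := by
      rw [norm_eq_sqrt_real_inner, hinner, diagonal_apply_eq]
    simpa [w, hnorm, Module.Basis.toMatrix_apply, mul_comm] using congrArg (· i) (hb j)

theorem exists_orthogonal_nuclearNorm_eq_sum_sqrt (C : Matrix m n ℝ) :
    ∃ (U : Matrix n n ℝ) (μ : n → ℝ), Uᵀ * U = 1 ∧ (C * U)ᵀ * (C * U) = diagonal μ ∧
      nuclearNorm C = ∑ j, √(μ j) := by
  have hA := posSemidef_transpose_mul_self C
  let U : Matrix n n ℝ := hA.1.eigenvectorUnitary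
  have hU : Uᵀ * U = 1 := by
    simpa [U, star_eq_conjTranspose] using Unitary.coe_star_mul_self hA.1.eigenvectorUnitary
  refine ⟨U, hA.1.eigenvalues, hU, ?_, ?_⟩
  · have hdiag := hA.1.conjStarAlgAut_star_eigenvectorUnitary
    rw [Unitary.conjStarAlgAut_star_apply] at hdiag
    simpa [U, Matrix.mul_assoc, star_eq_conjTranspose] using hdiag
  · rw [nuclearNorm, psdSqrt, dif_pos hA, trace_mul_cycle, Unitary.coe_star_mul_self,
      Matrix.one_mul, trace_diagonal]
    simp

theorem trace_mul_le_nuclearNorm (C Q : Matrix n n ℝ) (hQ : Qᵀ * Q = 1) :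
    (C * Q).trace ≤ nuclearNorm C := by
  obtain ⟨U, μ, hU, hCU, hnuc⟩ := exists_orthogonal_nuclearNorm_eq_sum_sqrt C
  have hQU : (Qᵀ * U)ᵀ * (Qᵀ * U) = 1 := by
    rw [transpose_mul, transpose_transpose, Matrix.mul_assoc, ← Matrix.mul_assoc Q,
      mul_eq_one_comm.mp hQ, Matrix.one_mul, hU]
  have htrace : (C * Q).trace = ((Qᵀ * U)ᵀ * (C * U)).trace := by
    rw [transpose_mul, transpose_transpose, trace_mul_cycle, Matrix.mul_assoc C U,
      mul_eq_one_comm.mp hU, Matrix.mul_one]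
  rw [htrace, hnuc, trace]
  refine Finset.sum_le_sum fun j _ => ?_
  calc ((Qᵀ * U)ᵀ * (C * U)) j j ≤ √((1 : Matrix n n ℝ) j j) * √(diagonal μ j j) :=
        hQU ▸ hCU ▸ transpose_mul_apply_le_sqrt_mul_sqrt _ _ j j
    _ = √(μ j) := by simp

theorem exists_orthogonal_trace_mul_eq_nuclearNorm (C : Matrix n n ℝ) :
    ∃ Q : Matrix n n ℝ, Qᵀ * Q = 1 ∧ (C * Q).trace = nuclearNorm C := by
  obtain ⟨U, μ, hU, hCU, hnuc⟩ := exists_orthogonal_nuclearNorm_eq_sum_sqrt C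
  obtain ⟨V, hV, hCUV⟩ := exists_orthogonal_mul_diagonal_sqrt hCU
  refine ⟨U * Vᵀ, ?_, ?_⟩
  · rw [transpose_mul, transpose_transpose, Matrix.mul_assoc, ← Matrix.mul_assoc Uᵀ, hU,
      Matrix.one_mul, mul_eq_one_comm.mp hV]
  · rw [← Matrix.mul_assoc, trace_mul_comm, hCUV, ← Matrix.mul_assoc, hV, Matrix.one_mul,
      trace_diagonal, hnuc]

end Matrix

theorem blockDiag_eq_submatrix (Q : Fin N → Matrix (Fin d) (Fin d) ℝ) :
    blockDiag Q = (blockDiagonal Q).submatrix (Equiv.prodComm _ _) (Equiv.prodComm _ _) := by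
  ext ⟨s, i⟩ ⟨t, j⟩
  by_cases hst : s = t
  · subst hst; simp [_root_.blockDiag, blockDiagonal_apply]
  · simp [_root_.blockDiag, blockDiagonal_apply, hst]

theorem transpose_blockDiag (Q : Fin N → Matrix (Fin d) (Fin d) ℝ) :
    (blockDiag Q)ᵀ = blockDiag fun t => (Q t)ᵀ := by
  rw [blockDiag_eq_submatrix, blockDiag_eq_submatrix, transpose_submatrix,
    blockDiagonal_transpose]

theorem blockDiag_mul_blockDiag (R Q : Fin N → Matrix (Fin d) (Fin d) ℝ) :
    blockDiag R * blockDiag Q = blockDiag fun t => R t * Q t := by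
  rw [blockDiag_eq_submatrix, blockDiag_eq_submatrix, blockDiag_eq_submatrix,
    submatrix_mul_equiv, blockDiagonal_mul]

theorem blockDiag_const_one : blockDiag (fun _ => 1 : Fin N → Matrix (Fin d) (Fin d) ℝ) = 1 := by
  rw [blockDiag_eq_submatrix, ← Pi.one_def, blockDiagonal_one, submatrix_one_equiv]

theorem trace_mul_blockDiag (A : Matrix (Fin N × Fin d) (Fin N × Fin d) ℝ)
    (Q : Fin N → Matrix (Fin d) (Fin d) ℝ) :
    (A * blockDiag Q).trace = ∑ t, (diagBlock A t * Q t).trace := by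
  simp only [trace, diag_apply, mul_apply, _root_.blockDiag, diagBlock, Fintype.sum_prod_type,
    mul_ite, mul_zero]
  refine Finset.sum_congr rfl fun t _ => ?_
  rw [Finset.sum_comm]
  simp

theorem transpose_blockDiag_mul_self {Q : Fin N → Matrix (Fin d) (Fin d) ℝ}
    (hQ : ∀ t, (Q t)ᵀ * Q t = 1) : (blockDiag Q)ᵀ * blockDiag Q = 1 := by
  simp only [transpose_blockDiag, blockDiag_mul_blockDiag, hQ, blockDiag_const_one]

section Frobenius

attribute [local instance] Matrix.frobeniusNormedAddCommGroup

variable {m n : Type*} [Fintype m] [Fintype n]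

theorem frobSq_eq_norm_sq (C : Matrix m n ℝ) : frobSq C = ‖C‖ ^ 2 := by
  rw [frobenius_norm_def, ← Real.sqrt_eq_rpow, Real.sq_sqrt (by positivity)]
  simp [frobSq]

theorem frobSq_eq_trace_mul_transpose (C : Matrix m n ℝ) : frobSq C = (C * Cᵀ).trace := by
  simp [frobSq, trace, mul_apply, sq]

theorem frobSq_sub (A B : Matrix m n ℝ) :
    frobSq (A - B) = frobSq A + frobSq B - 2 * (Aᵀ * B).trace := by
  simp only [frobSq, trace, diag_apply, mul_apply, transpose_apply, Matrix.sub_apply]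
  rw [Finset.sum_comm (f := fun j i => A i j * B i j)]
  simp only [Finset.mul_sum, ← Finset.sum_add_distrib, ← Finset.sum_sub_distrib]
  refine Finset.sum_congr rfl fun i _ => Finset.sum_congr rfl fun j _ => by ring

theorem norm_mul_eq_of_transpose_mul_self_eq_one [DecidableEq n] (X : Matrix m n ℝ)
    {B : Matrix n n ℝ} (hB : Bᵀ * B = 1) : ‖X * B‖ = ‖X‖ := by
  have h : frobSq (X * B) = frobSq X := by
    rw [frobSq_eq_trace_mul_transpose, frobSq_eq_trace_mul_transpose, transpose_mul,
      Matrix.mul_assoc, ← Matrix.mul_assoc B, mul_eq_one_comm.mp hB, Matrix.one_mul]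
  rwa [frobSq_eq_norm_sq, frobSq_eq_norm_sq, sq_eq_sq₀ (norm_nonneg _) (norm_nonneg _)] at h

end Frobenius

section Procrustes

attribute [local instance] Matrix.frobeniusNormedAddCommGroup

variable (L M P : Matrix (Fin N × Fin d) (Fin N × Fin d) ℝ)

theorem sq_norm_sub_mul_blockDiag {Q : Fin N → Matrix (Fin d) (Fin d) ℝ}
    (hQ : ∀ t, (Q t)ᵀ * Q t = 1) :
    ‖L - M * blockDiag Q‖ ^ 2 =
      frobSq L + frobSq M - 2 * ∑ t, (diagBlock (Lᵀ * M) t * Q t).trace := by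
  rw [← frobSq_eq_norm_sq, frobSq_sub, frobSq_eq_norm_sq (M * _),
    norm_mul_eq_of_transpose_mul_self_eq_one _ (transpose_blockDiag_mul_self hQ),
    ← frobSq_eq_norm_sq, ← Matrix.mul_assoc, trace_mul_blockDiag]

theorem distAW_le_norm_sub_mul_blockDiag {Q : Fin N → Matrix (Fin d) (Fin d) ℝ}
    (hQ : ∀ t, (Q t)ᵀ * Q t = 1) : distAW L M ≤ ‖L - M * blockDiag Q‖ := by
  rw [distAW, ← Real.sqrt_sq (norm_nonneg _), sq_norm_sub_mul_blockDiag L M hQ, distAWsq]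
  gcongr with t
  exact trace_mul_le_nuclearNorm _ _ (hQ t)

theorem exists_distAW_eq_norm_sub_mul_blockDiag :
    ∃ Q : Fin N → Matrix (Fin d) (Fin d) ℝ,
      (∀ t, (Q t)ᵀ * Q t = 1) ∧ distAW L M = ‖L - M * blockDiag Q‖ := by
  choose Q hQ htrace using fun t =>
    exists_orthogonal_trace_mul_eq_nuclearNorm (diagBlock (Lᵀ * M) t)
  refine ⟨Q, hQ, ?_⟩
  rw [distAW, ← Real.sqrt_sq (norm_nonneg _), sq_norm_sub_mul_blockDiag L M hQ, distAWsq]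
  simp only [htrace]

theorem distAW_self : distAW L L = 0 := by
  refine le_antisymm ?_ (Real.sqrt_nonneg _)
  simpa [blockDiag_const_one] using
    distAW_le_norm_sub_mul_blockDiag L L (Q := fun _ => 1) fun _ => by simp

theorem distAW_comm_le : distAW M L ≤ distAW L M := by
  obtain ⟨Q, hQ, hLM⟩ := exists_distAW_eq_norm_sub_mul_blockDiag L M
  have hQt (t : Fin N) : (Q t)ᵀᵀ * (Q t)ᵀ = 1 := by
    rw [transpose_transpose, mul_eq_one_comm.mp (hQ t)]
  calc distAW M L ≤ ‖M - L * blockDiag fun t => (Q t)ᵀ‖ :=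
        distAW_le_norm_sub_mul_blockDiag M L hQt
    _ = ‖(L - M * blockDiag Q) * blockDiag fun t => (Q t)ᵀ‖ := by
        rw [norm_sub_rev, Matrix.sub_mul, Matrix.mul_assoc, ← transpose_blockDiag,
          mul_eq_one_comm.mp (transpose_blockDiag_mul_self hQ), Matrix.mul_one]
    _ = distAW L M := by
        rw [norm_mul_eq_of_transpose_mul_self_eq_one _ (transpose_blockDiag_mul_self hQt), hLM]

theorem distAW_comm : distAW L M = distAW M L :=
  le_antisymm (distAW_comm_le M L) (distAW_comm_le L M)

theorem distAW_triangle : distAW L P ≤ distAW L M + distAW M P := by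
  obtain ⟨Q, hQ, hLM⟩ := exists_distAW_eq_norm_sub_mul_blockDiag L M
  obtain ⟨R, hR, hMP⟩ := exists_distAW_eq_norm_sub_mul_blockDiag M P
  have hRQ (t : Fin N) : (R t * Q t)ᵀ * (R t * Q t) = 1 := by
    rw [transpose_mul, Matrix.mul_assoc, ← Matrix.mul_assoc (R t)ᵀ, hR, Matrix.one_mul, hQ]
  calc distAW L P ≤ ‖L - P * blockDiag fun t => R t * Q t‖ :=
        distAW_le_norm_sub_mul_blockDiag L P hRQ
    _ = ‖(L - M * blockDiag Q) + (M - P * blockDiag R) * blockDiag Q‖ := by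
        rw [← blockDiag_mul_blockDiag, Matrix.sub_mul, Matrix.mul_assoc, sub_add_sub_cancel]
    _ ≤ ‖L - M * blockDiag Q‖ + ‖(M - P * blockDiag R) * blockDiag Q‖ := norm_add_le _ _
    _ = distAW L M + distAW M P := by
        rw [norm_mul_eq_of_transpose_mul_self_eq_one _ (transpose_blockDiag_mul_self hQ), hLM,
          hMP]

end Procrustes

theorem distAW_pseudometric_general (N d : ℕ)
    (L M P : Matrix (Fin N × Fin d) (Fin N × Fin d) ℝ) :
    0 ≤ distAW L M ∧
    distAW L M = distAW M L ∧
    distAW L L = 0 ∧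
    distAW L P ≤ distAW L M + distAW M P :=
  ⟨Real.sqrt_nonneg _, distAW_comm L M, distAW_self L, distAW_triangle L M P⟩

/-- `dist_AW` is a pseudometric on block lower triangular matrices:
nonnegative, symmetric, vanishing on the diagonal, and satisfying the
triangle inequality. -/
theorem distAW_pseudometric (N d : ℕ)
    (L M P : Matrix (Fin N × Fin d) (Fin N × Fin d) ℝ)
    (hL : BlockLowerTri L) (hM : BlockLowerTri M) (hP : BlockLowerTri P) :
    0 ≤ distAW L M ∧
    distAW L M = distAW M L ∧
    distAW L L = 0 ∧
    distAW L P ≤ distAW L M + distAW M P :=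
  distAW_pseudometric_general N d L M P
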